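/- arXiv:1207.5998 — 3 statements merged into one kernel-verified Lean document; each statement's English description precedes it below -/
import Mathlib

section
/- For a finite configuration of closed balls in the plane, the sum over all balls B(x,R) in the configuration of the length of the part of the sphere S(x,R) lying outside the union of the other balls equals the perimeter of the union of all the balls. -/
open MeasureTheory Metric
open scoped ENNReal Classical

/-- The plane ℝ². -/
local notation "Plane" => EuclideanSpace ℝ (Fin 2)

/-!
A point of the boundary of a finite union of closed sets lies on the boundary of one of
them; either it is outside all the others, and then it belongs to the exposed part of that
boundary, or it lies on two of the boundaries. Conversely an exposed boundary point is a
boundary point of the union, and exposed parts of distinct sets are disjoint. So the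
boundary of the union is the disjoint union of the exposed parts up to the pairwise
intersections of the boundaries; for circles in general position these are finite, hence
`μH[1]`-null, and `frontier (closedBall x R) = sphere x R`.
-/

open Set

section FrontierOfFiniteUnion

variable {X ι : Type*} [TopologicalSpace X] [DecidableEq ι] {s : Finset ι} {t : ι → Set X}

theorem mem_frontier_union_of_notMem_closure {a b : Set X} {x : X} (ha : x ∈ frontier a)
    (hb : x ∉ closure b) : x ∈ frontier (a ∪ b) := by
  refine ⟨closure_mono subset_union_left ha.1, fun hx => ha.2 ?_⟩
  have hsub : interior (a ∪ b) ∩ (closure b)ᶜ ⊆ a := fun y hy =>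
    (interior_subset hy.1).resolve_right fun h => hy.2 (subset_closure h)
  exact interior_maximal hsub (isOpen_interior.inter isClosed_closure.isOpen_compl) ⟨hx, hb⟩

theorem frontier_inter_compl_biUnion_erase_subset (ht : ∀ j ∈ s, IsClosed (t j)) {i : ι}
    (hi : i ∈ s) :
    frontier (t i) ∩ (⋃ j ∈ s.erase i, t j)ᶜ ⊆ frontier (⋃ j ∈ s, t j) := by
  rintro x ⟨hx, hxK⟩
  have hK : IsClosed (⋃ j ∈ s.erase i, t j) :=
    isClosed_biUnion_finset fun j hj => ht j (Finset.mem_of_mem_erase hj)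
  rw [← Finset.insert_erase hi, Finset.set_biUnion_insert]
  exact mem_frontier_union_of_notMem_closure hx (by rwa [hK.closure_eq])

theorem pairwiseDisjoint_frontier_inter_compl_biUnion_erase (ht : ∀ j ∈ s, IsClosed (t j)) :
    (s : Set ι).PairwiseDisjoint fun i => frontier (t i) ∩ (⋃ j ∈ s.erase i, t j)ᶜ := by
  intro i hi j _ hij
  exact disjoint_left.2 fun x hxi hxj =>
    hxj.2 (mem_biUnion (Finset.mem_erase.2 ⟨hij, hi⟩) ((ht i hi).frontier_subset hxi.1))

theorem frontier_biUnion_subset (ht : ∀ j ∈ s, IsClosed (t j)) :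
    frontier (⋃ j ∈ s, t j) ⊆ (⋃ i ∈ s, frontier (t i) ∩ (⋃ j ∈ s.erase i, t j)ᶜ) ∪
      ⋃ i ∈ s, ⋃ j ∈ s.erase i, frontier (t i) ∩ frontier (t j) := by
  intro x hx
  have hedge : ∀ j ∈ s, x ∈ t j → x ∈ frontier (t j) := fun j hj hxj => by
    rw [(ht j hj).frontier_eq]
    exact ⟨hxj, fun h => hx.2 (interior_mono (subset_biUnion_of_mem (u := t) hj) h)⟩
  obtain ⟨i, hi, hxi⟩ := mem_iUnion₂.1 ((isClosed_biUnion_finset ht).frontier_subset hx)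
  by_cases hK : x ∈ ⋃ j ∈ s.erase i, t j
  · obtain ⟨j, hj, hxj⟩ := mem_iUnion₂.1 hK
    exact Or.inr (mem_biUnion hi (mem_biUnion hj
      ⟨hedge i hi hxi, hedge j (Finset.mem_of_mem_erase hj) hxj⟩))
  · exact Or.inl (mem_biUnion hi ⟨hedge i hi hxi, hK⟩)

theorem sum_measure_frontier_inter_compl_biUnion_erase [MeasurableSpace X]
    [OpensMeasurableSpace X] (μ : Measure X) (ht : ∀ j ∈ s, IsClosed (t j))
    (hnull : ∀ i ∈ s, ∀ j ∈ s, i ≠ j → μ (frontier (t i) ∩ frontier (t j)) = 0) :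
    ∑ i ∈ s, μ (frontier (t i) ∩ (⋃ j ∈ s.erase i, t j)ᶜ) = μ (frontier (⋃ j ∈ s, t j)) := by
  have hmeas : ∀ i ∈ s, MeasurableSet (frontier (t i) ∩ (⋃ j ∈ s.erase i, t j)ᶜ) :=
    fun i _ => isClosed_frontier.measurableSet.inter
      (isClosed_biUnion_finset fun j hj => ht j (Finset.mem_of_mem_erase hj)).measurableSet.compl
  have hcross : μ (⋃ i ∈ s, ⋃ j ∈ s.erase i, frontier (t i) ∩ frontier (t j)) = 0 :=
    (measure_biUnion_null_iff s.countable_toSet).2 fun i hi =>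
      (measure_biUnion_null_iff (s.erase i).countable_toSet).2 fun j hj =>
        hnull i hi j (Finset.mem_of_mem_erase hj) (Finset.ne_of_mem_erase hj).symm
  rw [← measure_biUnion_finset (pairwiseDisjoint_frontier_inter_compl_biUnion_erase ht) hmeas]
  refine le_antisymm
    (measure_mono (iUnion₂_subset fun i hi => frontier_inter_compl_biUnion_erase_subset ht hi))
    (measure_mono_ae (ae_le_set.2 (measure_mono_null ?_ hcross)))
  exact sdiff_subset_iff.2 (frontier_biUnion_subset ht)

end FrontierOfFiniteUnion

theorem stmt_0_general (ω : Finset (Plane × ℝ))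
    (hgen : ∀ p ∈ ω, ∀ q ∈ ω, p ≠ q →
      (sphere p.1 p.2 ∩ sphere q.1 q.2).Finite) :
    ∑ p ∈ ω, μH[1] (sphere p.1 p.2 ∩ (⋃ q ∈ ω.erase p, closedBall q.1 q.2)ᶜ)
      = μH[1] (frontier (⋃ p ∈ ω, closedBall p.1 p.2)) := by
  have := Measure.nullSingletonClass_hausdorff Plane one_pos
  have key := sum_measure_frontier_inter_compl_biUnion_erase μH[1]
    (t := fun p : Plane × ℝ => closedBall p.1 p.2) (fun _ _ => isClosed_closedBall)
    fun p hp q hq hpq => by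
      simpa only [frontier_closedBall'] using (hgen p hp q hq hpq).measure_zero _
  simpa only [frontier_closedBall'] using key

/-- For a finite configuration of closed balls in general position,
the sum over the balls `B(x,R)` of the length (1-dimensional Hausdorff measure) of
the part of the sphere `S(x,R)` lying outside the union of the other balls equals
the perimeter (1-dimensional Hausdorff measure of the topological boundary) of the
union of all the balls. -/
theorem stmt_0 (ω : Finset (Plane × ℝ))
    (hpos : ∀ p ∈ ω, 0 < p.2)
    (hgen : ∀ p ∈ ω, ∀ q ∈ ω, p ≠ q →
      (sphere p.1 p.2 ∩ sphere q.1 q.2).Finite) :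
    ∑ p ∈ ω, μH[1] (sphere p.1 p.2 ∩ (⋃ q ∈ ω.erase p, closedBall q.1 q.2)ᶜ)
      = μH[1] (frontier (⋃ p ∈ ω, closedBall p.1 p.2)) :=
  stmt_0_general ω hgen
end

section
/- For a finite configuration of balls and any α > 0, the sum over all balls of the length of the α-dilated sphere S(x,R+α) outside the α-parallel set of the union of the remaining balls equals the perimeter of the α-parallel set of the union of all balls. -/
open MeasureTheory Metric
open scoped ENNReal Classical Pointwise

local notation "Plane" => EuclideanSpace ℝ (Fin 2)

/-!
Since `B(x,R) + B(0,α) = B(x,R+α)`, the α-parallel set is the union `U` of the dilated closed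
balls, and its boundary lies on the dilated spheres. The part of a sphere `S_i` outside the other
dilated balls lies on the boundary of `U`: near such a point `U` coincides with `B_i`, whose
interior is the open ball. These parts are pairwise disjoint, as `S_j ⊆ B_j`, and the rest of the
boundary lies in the pairwise intersections `S_i ∩ S_j`, which are finite by general position and
so have zero length.
-/

section PseudoMetric

variable {ι X : Type*} [PseudoMetricSpace X] (s : Finset ι) (c : ι → X) (r : ι → ℝ)

theorem mem_sphere_of_mem_frontier_biUnion_closedBall {i : ι} (hi : i ∈ s) {x : X}
    (hx : x ∈ frontier (⋃ j ∈ s, closedBall (c j) (r j))) (hxi : x ∈ closedBall (c i) (r i)) :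
    x ∈ sphere (c i) (r i) := by
  have hball : ball (c i) (r i) ⊆ interior (⋃ j ∈ s, closedBall (c j) (r j)) :=
    interior_maximal (ball_subset_closedBall.trans
      (Finset.subset_set_biUnion_of_mem (f := fun j => closedBall (c j) (r j)) hi)) isOpen_ball
  have hxb : x ∉ ball (c i) (r i) := fun h => hx.2 (hball h)
  rw [mem_closedBall] at hxi
  rw [mem_ball, not_lt] at hxb
  exact le_antisymm hxi hxb

theorem frontier_biUnion_closedBall_subset :
    frontier (⋃ i ∈ s, closedBall (c i) (r i)) ⊆ ⋃ i ∈ s, sphere (c i) (r i) := by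
  intro x hx
  have hclosed : IsClosed (⋃ i ∈ s, closedBall (c i) (r i)) :=
    s.finite_toSet.isClosed_biUnion fun _ _ => isClosed_closedBall
  obtain ⟨i, hi, hxi⟩ := Set.mem_iUnion₂.1 (hclosed.frontier_subset hx)
  exact Set.mem_biUnion hi (mem_sphere_of_mem_frontier_biUnion_closedBall s c r hi hx hxi)

variable [DecidableEq ι]

theorem pairwiseDisjoint_sphere_sdiff_biUnion_closedBall :
    (s : Set ι).PairwiseDisjoint
      fun i => sphere (c i) (r i) \ ⋃ j ∈ s.erase i, closedBall (c j) (r j) := by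
  intro i _ j hj hij
  refine Set.disjoint_left.2 fun x hxi hxj => hxi.2 ?_
  exact Set.mem_biUnion (Finset.mem_erase.2 ⟨hij.symm, hj⟩) (sphere_subset_closedBall hxj.1)

theorem frontier_biUnion_closedBall_sdiff_subset :
    frontier (⋃ i ∈ s, closedBall (c i) (r i)) \
        ⋃ i ∈ s, (sphere (c i) (r i) \ ⋃ j ∈ s.erase i, closedBall (c j) (r j)) ⊆
      ⋃ i ∈ s, ⋃ j ∈ s.erase i, sphere (c i) (r i) ∩ sphere (c j) (r j) := by
  rintro x ⟨hx, hxA⟩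
  obtain ⟨i, hi, hxi⟩ := Set.mem_iUnion₂.1 (frontier_biUnion_closedBall_subset s c r hx)
  have hxC : x ∈ ⋃ j ∈ s.erase i, closedBall (c j) (r j) := by
    by_contra h
    exact hxA (Set.mem_biUnion hi ⟨hxi, h⟩)
  obtain ⟨j, hj, hxj⟩ := Set.mem_iUnion₂.1 hxC
  have hxSj := mem_sphere_of_mem_frontier_biUnion_closedBall s c r (Finset.mem_of_mem_erase hj)
    hx hxj
  exact Set.mem_biUnion hi (Set.mem_biUnion hj ⟨hxi, hxSj⟩)

end PseudoMetric

section Normed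

variable {ι E : Type*} [NormedAddCommGroup E] [NormedSpace ℝ E]

theorem biUnion_closedBall_add_closedBall_zero [ProperSpace E] (s : Finset ι) (c : ι → E)
    {r : ι → ℝ} (hr : ∀ i ∈ s, 0 ≤ r i) {a : ℝ} (ha : 0 ≤ a) :
    (⋃ i ∈ s, closedBall (c i) (r i)) + closedBall 0 a = ⋃ i ∈ s, closedBall (c i) (r i + a) := by
  rw [Set.iUnion₂_add]
  exact Set.iUnion₂_congr fun i hi => by rw [closedBall_add_closedBall (hr i hi) ha, add_zero]

variable [DecidableEq ι] [Nontrivial E] (s : Finset ι) (c : ι → E) (r : ι → ℝ)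

theorem sphere_sdiff_biUnion_closedBall_subset_frontier {i : ι} (hi : i ∈ s) :
    sphere (c i) (r i) \ ⋃ j ∈ s.erase i, closedBall (c j) (r j) ⊆
      frontier (⋃ j ∈ s, closedBall (c j) (r j)) := by
  set C := ⋃ j ∈ s.erase i, closedBall (c j) (r j)
  have hU : (⋃ j ∈ s, closedBall (c j) (r j)) = closedBall (c i) (r i) ∪ C := by
    rw [← Finset.insert_erase hi, Finset.set_biUnion_insert]
  have hC : IsClosed C := (s.erase i).finite_toSet.isClosed_biUnion fun _ _ => isClosed_closedBall
  rintro x ⟨hxS, hxC⟩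
  rw [hU]
  refine ⟨subset_closure (Or.inl (sphere_subset_closedBall hxS)), fun hint => ?_⟩
  have hxi : x ∈ interior (closedBall (c i) (r i)) := by
    refine interior_maximal ?_ (isOpen_interior.inter hC.isOpen_compl) ⟨hint, hxC⟩
    rintro y ⟨hy, hyC⟩
    exact (interior_subset hy).resolve_right hyC
  rw [interior_closedBall', mem_ball, mem_sphere.1 hxS] at hxi
  exact lt_irrefl _ hxi

theorem sum_measure_sphere_sdiff_biUnion_closedBall [MeasurableSpace E] [OpensMeasurableSpace E]
    (μ : Measure E)
    (hμ : ∀ i ∈ s, ∀ j ∈ s, i ≠ j → μ (sphere (c i) (r i) ∩ sphere (c j) (r j)) = 0) :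
    ∑ i ∈ s, μ (sphere (c i) (r i) \ ⋃ j ∈ s.erase i, closedBall (c j) (r j)) =
      μ (frontier (⋃ i ∈ s, closedBall (c i) (r i))) := by
  have hmeas : ∀ i ∈ s,
      MeasurableSet (sphere (c i) (r i) \ ⋃ j ∈ s.erase i, closedBall (c j) (r j)) :=
    fun i _ => isClosed_sphere.measurableSet.diff
      ((s.erase i).finite_toSet.isClosed_biUnion fun _ _ => isClosed_closedBall).measurableSet
  have hnull : μ (⋃ i ∈ s, ⋃ j ∈ s.erase i, sphere (c i) (r i) ∩ sphere (c j) (r j)) = 0 :=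
    (measure_biUnion_null_iff s.countable_toSet).2 fun i hi =>
      (measure_biUnion_null_iff (s.erase i).countable_toSet).2 fun j hj =>
        hμ i hi j (Finset.mem_of_mem_erase hj) (Finset.ne_of_mem_erase hj).symm
  rw [← measure_biUnion_finset (pairwiseDisjoint_sphere_sdiff_biUnion_closedBall s c r) hmeas]
  exact measure_eq_measure_of_null_sdiff
    (Set.iUnion₂_subset fun i hi => sphere_sdiff_biUnion_closedBall_subset_frontier s c r hi)
    (measure_mono_null (frontier_biUnion_closedBall_sdiff_subset s c r) hnull)

end Normed

/-- For a finite configuration of balls in general position and any α > 0,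
the sum over all balls of the length of the α-dilated sphere `S(x,R+α)` outside the
α-parallel set (Minkowski sum with `B(0,α)`) of the union of the remaining balls equals
the perimeter of the α-parallel set of the union of all balls. -/
theorem stmt_1 (ω : Finset (Plane × ℝ)) (α : ℝ) (hα : 0 < α)
    (hpos : ∀ p ∈ ω, 0 < p.2)
    (hgen : ∀ p ∈ ω, ∀ q ∈ ω, p ≠ q →
      (sphere p.1 (p.2 + α) ∩ sphere q.1 (q.2 + α)).Finite) :
    ∑ p ∈ ω, μH[1] (sphere p.1 (p.2 + α) ∩
        (((⋃ q ∈ ω.erase p, closedBall q.1 q.2) + closedBall (0 : Plane) α))ᶜ)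
      = μH[1] (frontier ((⋃ p ∈ ω, closedBall p.1 p.2) + closedBall (0 : Plane) α)) := by
  have : NullSingletonClass (μH[1] : Measure Plane) := Measure.nullSingletonClass_hausdorff _ one_pos
  have hparallel : ∀ t ⊆ ω, (⋃ q ∈ t, closedBall q.1 q.2) + closedBall (0 : Plane) α =
      ⋃ q ∈ t, closedBall q.1 (q.2 + α) := fun t ht =>
    biUnion_closedBall_add_closedBall_zero t Prod.fst (fun q hq => (hpos q (ht hq)).le) hα.le
  rw [hparallel ω subset_rfl, Finset.sum_congr rfl fun p _ => by rw [hparallel _ (ω.erase_subset p), ← Set.sdiff_eq]]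
  exact sum_measure_sphere_sdiff_biUnion_closedBall ω Prod.fst (fun p => p.2 + α) μH[1]
    fun p hp q hq hpq => (hgen p hp q hq hpq).measure_zero _
end

section
/- The Quermass local energy of a new ball depends only on the configuration within distance 2R₀ of its centre: if two configurations agree on the ball B(x, 2R₀), then the local energies h^θ((x,R), ·) of the marked point (x,R) with R ≤ R₀ with respect to these configurations coincide. -/
open MeasureTheory Metric
open scoped ENNReal Classical

local notation "Plane" => EuclideanSpace ℝ (Fin 2)

/-- Union of grains of a finite configuration of marked points (centre, radius). -/
noncomputable def grainUnion (ω : Finset (Plane × ℝ)) : Set Plane :=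
  ⋃ p ∈ ω, closedBall p.1 p.2

lemma grainUnion_insert (p : Plane × ℝ) (ω : Finset (Plane × ℝ)) :
    grainUnion (insert p ω) = closedBall p.1 p.2 ∪ grainUnion ω := by
  simp [grainUnion]

lemma grainUnion_union (s t : Finset (Plane × ℝ)) :
    grainUnion (s ∪ t) = grainUnion s ∪ grainUnion t := by
  ext y
  simp only [grainUnion, Set.mem_iUnion, Set.mem_union, Finset.mem_union]
  constructor
  · rintro ⟨p, hp | hp, hy⟩
    · exact Or.inl ⟨p, hp, hy⟩
    · exact Or.inr ⟨p, hp, hy⟩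
  · rintro (⟨p, hp, hy⟩ | ⟨p, hp, hy⟩)
    exacts [⟨p, Or.inl hp, hy⟩, ⟨p, Or.inr hp, hy⟩]

lemma grainUnion_measurable (ω : Finset (Plane × ℝ)) : MeasurableSet (grainUnion ω) :=
  Finset.measurableSet_biUnion ω (fun _ _ => measurableSet_closedBall)

lemma grainUnion_volume_lt_top (ω : Finset (Plane × ℝ)) : volume (grainUnion ω) < ⊤ :=
  lt_of_le_of_lt (measure_biUnion_finset_le ω _)
    (ENNReal.sum_lt_top.mpr fun _ _ => measure_closedBall_lt_top)

/-- The Quermass Hamiltonian `H^θ(ω) = θ₁𝒜(U_ω) + θ₂ℒ(U_ω) + θ₃χ(U_ω)`, where the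
area `𝒜` is Lebesgue measure, and the perimeter `ℒ` and the Euler characteristic `χ`
are given functionals. -/
noncomputable def quermassH (θ₁ θ₂ θ₃ : ℝ) (L X : Set Plane → ℝ)
    (ω : Finset (Plane × ℝ)) : ℝ :=
  θ₁ * (volume (grainUnion ω)).toReal + θ₂ * L (grainUnion ω) + θ₃ * X (grainUnion ω)

/-- the Quermass local energy of a new marked ball `(x,R)` with `R ≤ R₀`
depends only on the configuration within distance `2R₀` of its centre: if two finite
configurations (of balls with radii in `[0,R₀]`) agree on `B(x,2R₀)`, then the local
energies `h^θ((x,R),·) = H^θ(· ∪ (x,R)) − H^θ(·)` coincide.  The perimeter `L` and the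
Euler characteristic `X` are additive functionals (valuations) vanishing on `∅`. -/
theorem stmt_2 (R₀ : ℝ) (hR₀ : 0 < R₀) (θ₁ θ₂ θ₃ : ℝ)
    (L X : Set Plane → ℝ)
    (hLadd : ∀ U V : Set Plane, L (U ∪ V) = L U + L V - L (U ∩ V))
    (hXadd : ∀ U V : Set Plane, X (U ∪ V) = X U + X V - X (U ∩ V))
    (hL0 : L ∅ = 0) (hX0 : X ∅ = 0)
    (ω ω' : Finset (Plane × ℝ))
    (hω : ∀ p ∈ ω, p.2 ∈ Set.Icc (0 : ℝ) R₀)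
    (hω' : ∀ p ∈ ω', p.2 ∈ Set.Icc (0 : ℝ) R₀)
    (x : Plane) (R : ℝ) (hR : R ∈ Set.Icc (0 : ℝ) R₀)
    (hagree : ω.filter (fun p => p.1 ∈ closedBall x (2 * R₀))
            = ω'.filter (fun p => p.1 ∈ closedBall x (2 * R₀))) :
    quermassH θ₁ θ₂ θ₃ L X (insert (x, R) ω) - quermassH θ₁ θ₂ θ₃ L X ω
      = quermassH θ₁ θ₂ θ₃ L X (insert (x, R) ω') - quermassH θ₁ θ₂ θ₃ L X ω' := by
  classical
  have key : ∀ σ : Finset (Plane × ℝ), (∀ p ∈ σ, p.2 ∈ Set.Icc (0 : ℝ) R₀) →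
      quermassH θ₁ θ₂ θ₃ L X (insert (x, R) σ) - quermassH θ₁ θ₂ θ₃ L X σ
        = θ₁ * ((volume (closedBall x R)).toReal
            - (volume (closedBall x R ∩
                grainUnion (σ.filter (fun p => p.1 ∈ closedBall x (2 * R₀))))).toReal)
          + θ₂ * (L (closedBall x R)
            - L (closedBall x R ∩
                grainUnion (σ.filter (fun p => p.1 ∈ closedBall x (2 * R₀)))))
          + θ₃ * (X (closedBall x R)
            - X (closedBall x R ∩
                grainUnion (σ.filter (fun p => p.1 ∈ closedBall x (2 * R₀))))) := by
    intro σ hσ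
    set B : Set Plane := closedBall x R with hBdef
    set N : Set Plane := grainUnion (σ.filter (fun p => p.1 ∈ closedBall x (2 * R₀))) with hNdef
    set F : Set Plane := grainUnion (σ.filter (fun p => ¬ p.1 ∈ closedBall x (2 * R₀))) with hFdef
    have hsplit : grainUnion σ = N ∪ F := by
      conv_lhs => rw [← Finset.filter_union_filter_not_eq
        (fun p : Plane × ℝ => p.1 ∈ closedBall x (2 * R₀)) σ]
      exact grainUnion_union _ _
    have hBF : B ∩ F = ∅ := by
      ext y
      simp only [Set.mem_inter_iff, Set.mem_empty_iff_false, iff_false, not_and]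
      intro hyB hyF
      rw [hFdef] at hyF
      simp only [grainUnion, Set.mem_iUnion, Finset.mem_filter] at hyF
      obtain ⟨p, ⟨hpσ, hpfar⟩, hyp⟩ := hyF
      apply hpfar
      rw [mem_closedBall]
      have h2 : dist y x ≤ R := mem_closedBall.mp hyB
      have := (hσ p hpσ).2
      calc dist p.1 x ≤ dist p.1 y + dist y x := dist_triangle _ _ _
        _ ≤ p.2 + R := add_le_add (mem_closedBall'.mp hyp) h2
        _ ≤ R₀ + R₀ := add_le_add (hσ p hpσ).2 hR.2
        _ = 2 * R₀ := by ring
    have hBU : B ∩ grainUnion σ = B ∩ N := by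
      rw [hsplit, Set.inter_union_distrib_left, hBF, Set.union_empty]
    have hins : grainUnion (insert (x, R) σ) = B ∪ grainUnion σ :=
      grainUnion_insert (x, R) σ
    -- volume part
    have hvol : (volume (B ∪ grainUnion σ)).toReal - (volume (grainUnion σ)).toReal
        = (volume B).toReal - (volume (B ∩ N)).toReal := by
      have hioe : volume (B ∪ grainUnion σ) + volume (B ∩ grainUnion σ)
          = volume B + volume (grainUnion σ) :=
        measure_union_add_inter B (grainUnion_measurable σ)
      have hBfin : volume B ≠ ⊤ := measure_closedBall_lt_top.ne
      have hUfin : volume (grainUnion σ) ≠ ⊤ := (grainUnion_volume_lt_top σ).ne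
      have hUnfin : volume (B ∪ grainUnion σ) ≠ ⊤ := by
        refine ne_top_of_le_ne_top ?_ (measure_union_le _ _)
        exact ENNReal.add_ne_top.mpr ⟨hBfin, hUfin⟩
      have hIfin : volume (B ∩ grainUnion σ) ≠ ⊤ :=
        ne_top_of_le_ne_top hBfin (measure_mono Set.inter_subset_left)
      have := congrArg ENNReal.toReal hioe
      rw [ENNReal.toReal_add hUnfin hIfin, ENNReal.toReal_add hBfin hUfin] at this
      rw [hBU] at this
      linarith
    have hLpart : L (B ∪ grainUnion σ) - L (grainUnion σ) = L B - L (B ∩ N) := by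
      rw [hLadd B (grainUnion σ), hBU]; ring
    have hXpart : X (B ∪ grainUnion σ) - X (grainUnion σ) = X B - X (B ∩ N) := by
      rw [hXadd B (grainUnion σ), hBU]; ring
    simp only [quermassH, hins]
    linear_combination θ₁ * hvol + θ₂ * hLpart + θ₃ * hXpart
  rw [key ω hω, key ω' hω', hagree]
end
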